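/- Fix an integer d ≥ 2. For every n ≥ 0, the three-choice corridor number c'_n satisfies c'_n = Σ_{j=0}^{n} C(n,j) · Σ_{m∈ℤ} [ C(j+1, 2dm − j + n) − C(j+1, 2dm − j + n + d) ], where the inner sum over m has only finitely many nonzero terms. -/

import Mathlib

/-- Binomial coefficient `C(n,x)` with integer lower argument, zero when `x < 0` or `x > n`. -/
noncomputable def binomZ (n : ℕ) (x : ℤ) : ℕ := if 0 ≤ x then n.choose x.toNat else 0

/-- Circular Pascal array of order `d` with initial offset `y0`:
`σ_{n,k} = Σ_{i=0}^{y0} Σ_{j∈ℤ} C(n, k − i + d·j)`. -/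
noncomputable def circPascal (d y0 n : ℕ) (k : ℤ) : ℕ :=
  ∑ i ∈ Finset.range (y0 + 1), ∑ᶠ j : ℤ, binomZ n (k - i + d * j)

/-- Three-choice corridor number: the number of sequences in `{−1,0,+1}` of length `n`
whose partial sums, shifted by the starting height `1`, stay in `{1,…,d−1}`. -/
noncomputable def motzkinCount (d n : ℕ) : ℕ :=
  Nat.card {r : Fin n → ℤ // (∀ i, r i = -1 ∨ r i = 0 ∨ r i = 1) ∧
    ∀ j : Fin n, 1 ≤ 1 + ∑ i ∈ Finset.Iic j, r i ∧
      1 + ∑ i ∈ Finset.Iic j, r i ≤ (d : ℤ) - 1}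

/-!
Reflection principle. Let `W k` be the number of unconstrained walks of length `n` with steps in
`{-1, 0, 1}` from `0` to `k`, and `F a = W a + W (a - 1)`. Expanding
`(1 + x) (1 + x + x²) ^ n = ∑ j, C(n, j) x ^ j (1 + x) ^ (j + 1)` identifies `F a` with the inner
binomial sum of the formula. The number of corridor walks from `1` to `y` equals
`∑ m, (F (y - 2dm) - F (y + 1 - 2dm))`: both sides obey the same three-term recursion in `n` and
agree for `n = 0`, and since `F (1 - a) = F a` the right side is odd and `2d`-periodic in `y`,
hence vanishes on the walls `y = 0` and `y = d`. Summing over `0 < y < d` telescopes to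
`∑ m, (F (2dm) - F (2dm + d))`.
-/

open Finset Function

lemma binomZ_of_neg {n : ℕ} {x : ℤ} (hx : x < 0) : binomZ n x = 0 := by
  simp [binomZ, not_le.mpr hx]

lemma binomZ_of_lt {n : ℕ} {x : ℤ} (hx : n < x) : binomZ n x = 0 := by
  rw [binomZ, if_pos (by omega), Nat.choose_eq_zero_of_lt (by omega)]

lemma binomZ_succ (n : ℕ) (x : ℤ) : binomZ (n + 1) x = binomZ n x + binomZ n (x - 1) := by
  rcases lt_trichotomy x 0 with hx | rfl | hx
  · simp [binomZ_of_neg, hx, show x - 1 < 0 by omega]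
  · simp [binomZ]
  · obtain ⟨k, rfl⟩ : ∃ k : ℕ, x = k + 1 := ⟨x.toNat - 1, by omega⟩
    simp [binomZ, Nat.choose_succ_succ', add_comm, show (0 : ℤ) ≤ k + 1 by omega]

lemma hasFiniteSupport_binomZ (n : ℕ) : HasFiniteSupport fun x => (binomZ n x : ℤ) := by
  refine (Set.finite_Icc 0 (n : ℤ)).subset fun x hx => ?_
  by_contra hx'
  rw [Set.mem_Icc, not_and_or, not_le, not_le] at hx'
  rcases hx' with h | h <;> simp [binomZ_of_neg, binomZ_of_lt, h] at hx

/-- The coefficient of `x ^ (a + n)` in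
`(1 + x) (1 + x + x²) ^ n = ∑ j, C(n, j) x ^ j (1 + x) ^ (j + 1)`. -/
noncomputable def freeCount (n : ℕ) (a : ℤ) : ℤ :=
  ∑ j ∈ range (n + 1), (n.choose j : ℤ) * binomZ (j + 1) (a - j + n)

lemma freeCount_zero (a : ℤ) : freeCount 0 a = if a = 0 ∨ a = 1 then 1 else 0 := by
  rw [show freeCount 0 a = binomZ 1 a by simp [freeCount]]
  rcases lt_or_ge a 0 with h | h
  · simp [binomZ_of_neg h]; omega
  rcases lt_or_ge 1 a with h' | h'
  · simp [binomZ_of_lt h']; omega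
  obtain rfl | rfl : a = 0 ∨ a = 1 := by omega
  all_goals simp [binomZ]

lemma freeCount_succ (n : ℕ) (a : ℤ) :
    freeCount (n + 1) a = freeCount n (a - 1) + freeCount n a + freeCount n (a + 1) := by
  have h := sum_choose_succ_mul (fun i k => (binomZ (i + 1) (a + k) : ℤ)) n
  have tsub : ∀ i ∈ range (n + 1), ((n - i : ℕ) : ℤ) = n - i := fun i hi =>
    Nat.cast_sub (by simpa [Nat.lt_succ_iff] using hi)
  have lhs : freeCount (n + 1) a = ∑ i ∈ range (n + 2), ((n + 1).choose i : ℤ) *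
      binomZ (i + 1) (a + (n + 1 - i : ℕ)) :=
    sum_congr rfl fun i hi => by
      rw [Nat.cast_sub (by simpa [Nat.lt_succ_iff] using hi)]; push_cast; ring_nf
  have first : ∑ i ∈ range (n + 1), (n.choose i : ℤ) * binomZ (i + 1) (a + (n + 1 - i : ℕ)) =
      freeCount n (a + 1) :=
    sum_congr rfl fun i hi => by
      rw [Nat.sub_add_comm (by simpa [Nat.lt_succ_iff] using hi), Nat.cast_succ, tsub i hi]
      ring_nf
  have second : ∑ i ∈ range (n + 1), (n.choose i : ℤ) * binomZ (i + 1 + 1) (a + (n - i : ℕ)) =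
      freeCount n a + freeCount n (a - 1) := by
    rw [freeCount, freeCount, ← sum_add_distrib]
    refine sum_congr rfl fun i hi => ?_
    rw [binomZ_succ, tsub i hi]
    push_cast
    ring_nf
  rw [lhs, h, first, second]
  ring

lemma freeCount_one_sub (n : ℕ) (a : ℤ) : freeCount n (1 - a) = freeCount n a := by
  induction n generalizing a with
  | zero => simp only [freeCount_zero]; split_ifs <;> omega
  | succ n ih =>
    rw [freeCount_succ, freeCount_succ, show 1 - a - 1 = 1 - (a + 1) by ring,
      show 1 - a + 1 = 1 - (a - 1) by ring, ih, ih, ih]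
    ring

lemma hasFiniteSupport_freeCount (n : ℕ) : HasFiniteSupport (freeCount n) := by
  induction n with
  | zero =>
    refine (Set.finite_Icc (0 : ℤ) 1).subset fun a ha => ?_
    rw [mem_support, freeCount_zero] at ha
    split_ifs at ha with h
    · rw [Set.mem_Icc]; omega
    · exact absurd rfl ha
  | succ n ih =>
    rw [show freeCount (n + 1) = fun a => freeCount n (a - 1) + freeCount n a + freeCount n (a + 1)
      from funext (freeCount_succ n)]
    exact ((ih.fun_comp_of_injective (sub_left_injective (b := 1))).add ih).add
      (ih.fun_comp_of_injective (add_left_injective 1))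

lemma sum_Ico_sub_add_one {G : Type*} [AddCommGroup G] (f : ℤ → G) {a b : ℤ} (hab : a ≤ b) :
    ∑ y ∈ Ico a b, (f y - f (y + 1)) = f a - f b := by
  induction b, hab using Int.leInduction with
  | base => simp
  | succ b hab ih =>
    rw [← insert_Ico_right_eq_Ico_add_one hab, sum_insert (by simp), ih]
    abel

/-- Method of images for the strip `0 < y < d`. When `f a = W a + W (a - 1)`, as for
`freeCount n`, the summand is `W (y - 1 - 2dm) - W (y + 1 - 2dm)`: the images of the starting
point `1` under the reflections in `0` and `d`. -/
noncomputable def imageSum {G : Type*} [AddCommGroup G] (d : ℕ) (f : ℤ → G) (y : ℤ) : G :=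
  ∑ᶠ m : ℤ, (f (y - 2 * d * m) - f (y + 1 - 2 * d * m))

section ImageSum

variable {G : Type*} [AddCommGroup G] {d : ℕ} {f : ℤ → G}

lemma Function.HasFiniteSupport.comp_sub_two_mul (hf : HasFiniteSupport f) (hd : d ≠ 0) (c : ℤ) :
    HasFiniteSupport fun m : ℤ => f (c - 2 * d * m) :=
  hf.fun_comp_of_injective fun a b h => by simpa [hd] using h

lemma Function.HasFiniteSupport.imageSum_summand (hf : HasFiniteSupport f) (hd : d ≠ 0) (y : ℤ) :
    HasFiniteSupport fun m : ℤ => f (y - 2 * d * m) - f (y + 1 - 2 * d * m) :=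
  (hf.comp_sub_two_mul hd y).sub (hf.comp_sub_two_mul hd (y + 1))

lemma imageSum_add_two_mul (y : ℤ) :
    imageSum d f (y + 2 * d) = imageSum d f y := by
  rw [imageSum, ← finsum_comp_equiv (Equiv.addRight 1)]
  exact finsum_congr fun m => by simp only [Equiv.coe_addRight]; ring_nf

lemma imageSum_neg (hsymm : ∀ a, f (1 - a) = f a) (y : ℤ) :
    imageSum d f (-y) = -imageSum d f y := by
  rw [imageSum, imageSum, ← finsum_neg_distrib, ← finsum_comp_equiv (Equiv.neg ℤ)]
  refine finsum_congr fun m => ?_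
  rw [Equiv.neg_apply, ← hsymm (-y - _), ← hsymm (-y + 1 - _)]
  ring_nf
  abel

lemma imageSum_zero [IsAddTorsionFree G] (hsymm : ∀ a, f (1 - a) = f a) :
    imageSum d f 0 = 0 :=
  self_eq_neg.mp (by simpa using imageSum_neg hsymm 0)

lemma imageSum_self [IsAddTorsionFree G] (hsymm : ∀ a, f (1 - a) = f a) :
    imageSum d f d = 0 := by
  refine self_eq_neg.mp ?_
  calc imageSum d f d = imageSum d f (-d + 2 * d) := by ring_nf
    _ = -imageSum d f d := by rw [imageSum_add_two_mul, imageSum_neg hsymm]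

lemma imageSum_three_step (hf : HasFiniteSupport f) (hd : d ≠ 0) (y : ℤ) :
    imageSum d (fun a => f (a - 1) + f a + f (a + 1)) y =
      imageSum d f (y - 1) + imageSum d f y + imageSum d f (y + 1) := by
  simp only [imageSum]
  rw [← finsum_add_distrib (hf.imageSum_summand hd _) (hf.imageSum_summand hd _),
    ← finsum_add_distrib ((hf.imageSum_summand hd _).fun_add (hf.imageSum_summand hd _))
      (hf.imageSum_summand hd _)]
  refine finsum_congr fun m => ?_
  ring_nf
  abel

lemma sum_Ico_imageSum (hsymm : ∀ a, f (1 - a) = f a) (hf : HasFiniteSupport f) (hd : d ≠ 0) :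
    ∑ y ∈ Ico (1 : ℤ) d, imageSum d f y = ∑ᶠ m : ℤ, (f (2 * d * m) - f (2 * d * m + d)) := by
  have telescope : ∀ m : ℤ, ∑ y ∈ Ico (1 : ℤ) d, (f (y - 2 * d * m) - f (y + 1 - 2 * d * m)) =
      f (1 - 2 * d * m) - f (d - 2 * d * m) := fun m =>
    sum_Ico_sub_add_one (fun y => f (y - 2 * d * m)) (by omega)
  simp only [imageSum]
  rw [← finsum_sum_comm _ _ fun y _ => hf.imageSum_summand hd y, finsum_congr telescope,
    finsum_sub_distrib (hf.comp_sub_two_mul hd 1) (hf.comp_sub_two_mul hd d),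
    finsum_sub_distrib, ← finsum_comp_equiv (Equiv.neg ℤ) (f := fun m => f (2 * d * m + d))]
  · congr 1
    · exact finsum_congr fun m => by rw [← hsymm]; ring_nf
    · exact finsum_congr fun m => by simp only [Equiv.neg_apply]; ring_nf
  all_goals exact hf.fun_comp_of_injective fun a b h => by simpa [hd] using h

end ImageSum

def IsCorridorWalk (d : ℕ) {n : ℕ} (r : Fin n → ℤ) : Prop :=
  (∀ i, r i = -1 ∨ r i = 0 ∨ r i = 1) ∧
    ∀ j : Fin n, 1 ≤ 1 + ∑ i ∈ Iic j, r i ∧ 1 + ∑ i ∈ Iic j, r i ≤ (d : ℤ) - 1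

open Classical in
noncomputable def corridorWalks (d n : ℕ) (y : ℤ) : Finset (Fin n → ℤ) :=
  {r ∈ Fintype.piFinset fun _ => {-1, 0, 1} | IsCorridorWalk d r ∧ 1 + ∑ i, r i = y}

section CorridorWalks

variable {d n : ℕ}

lemma IsCorridorWalk.mem_piFinset {r : Fin n → ℤ} (hr : IsCorridorWalk d r) :
    r ∈ Fintype.piFinset fun _ => ({-1, 0, 1} : Finset ℤ) :=
  Fintype.mem_piFinset.mpr fun i => by simpa using hr.1 i

lemma isCorridorWalk_snoc_iff {q : Fin n → ℤ} {s : ℤ} :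
    IsCorridorWalk d (Fin.snoc q s : Fin (n + 1) → ℤ) ↔
      IsCorridorWalk d q ∧ (s = -1 ∨ s = 0 ∨ s = 1) ∧
        1 ≤ 1 + ∑ i, q i + s ∧ 1 + ∑ i, q i + s ≤ (d : ℤ) - 1 := by
  have hlast : Iic (Fin.last n) = univ := by ext; simp [Fin.le_last]
  simp only [IsCorridorWalk, Fin.forall_fin_succ', Fin.sum_Iic_castSucc, hlast, Fin.sum_snoc,
    Fin.snoc_castSucc, Fin.snoc_last, add_assoc]
  tauto

lemma IsCorridorWalk.endpoint_mem (hd : 2 ≤ d) {r : Fin n → ℤ} (hr : IsCorridorWalk d r) :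
    1 + ∑ i, r i ∈ Ico (1 : ℤ) d := by
  cases n with
  | zero => simp; omega
  | succ n =>
    rw [← Fin.snoc_init_self r, isCorridorWalk_snoc_iff] at hr
    rw [← Fin.snoc_init_self r, Fin.sum_snoc, mem_Ico]
    omega

lemma mem_corridorWalks {y : ℤ} {r : Fin n → ℤ} :
    r ∈ corridorWalks d n y ↔ IsCorridorWalk d r ∧ 1 + ∑ i, r i = y := by
  simp only [corridorWalks, mem_filter, and_iff_right_iff_imp]
  exact fun h => h.1.mem_piFinset

lemma snoc_mem_corridorWalks_iff {y s : ℤ} {q : Fin n → ℤ} :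
    (Fin.snoc q s : Fin (n + 1) → ℤ) ∈ corridorWalks d (n + 1) y ↔
      (s = -1 ∨ s = 0 ∨ s = 1) ∧ 1 ≤ y ∧ y ≤ (d : ℤ) - 1 ∧ q ∈ corridorWalks d n (y - s) := by
  rw [mem_corridorWalks, mem_corridorWalks, isCorridorWalk_snoc_iff, Fin.sum_snoc]
  constructor
  · rintro ⟨⟨hq, hs, h1, h2⟩, rfl⟩
    exact ⟨hs, by omega, by omega, hq, by ring⟩
  · rintro ⟨hs, h1, h2, hq, hy⟩
    exact ⟨⟨hq, hs, by omega, by omega⟩, by omega⟩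

lemma motzkinCount_eq_sum_card_corridorWalks (hd : 2 ≤ d) :
    motzkinCount d n = ∑ y ∈ Ico (1 : ℤ) d, #(corridorWalks d n y) := by
  classical
  set walks := {r ∈ Fintype.piFinset fun _ : Fin n => ({-1, 0, 1} : Finset ℤ) | IsCorridorWalk d r}
  have hcount : motzkinCount d n = #walks := by
    rw [motzkinCount, ← Nat.card_eq_finsetCard]
    refine Nat.card_congr (Equiv.subtypeEquivRight fun r => ?_)
    simp only [walks, mem_filter]
    exact ⟨fun h => ⟨IsCorridorWalk.mem_piFinset h, h⟩, And.right⟩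
  rw [hcount, card_eq_sum_card_fiberwise fun r hr => (mem_filter.mp hr).2.endpoint_mem hd]
  refine sum_congr rfl fun y _ => congrArg card ?_
  ext r
  simp only [walks, mem_filter, mem_corridorWalks, and_assoc, and_iff_right_iff_imp]
  exact fun h => h.1.mem_piFinset

lemma card_corridorWalks_zero (y : ℤ) :
    #(corridorWalks d 0 y) = if y = 1 then 1 else 0 := by
  have hmem : ∀ r : Fin 0 → ℤ, r ∈ corridorWalks d 0 y ↔ y = 1 := fun r => by
    simp [mem_corridorWalks, IsCorridorWalk, eq_comm]
  split_ifs with hy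
  · exact card_eq_one.mpr ⟨finZeroElim, eq_singleton_iff_unique_mem.mpr
      ⟨(hmem _).mpr hy, fun r _ => Subsingleton.elim _ _⟩⟩
  · exact card_eq_zero.mpr (eq_empty_of_forall_notMem fun r hr => hy ((hmem r).mp hr))

lemma corridorWalks_succ_eq_empty {y : ℤ} (hy : y < 1 ∨ (d : ℤ) - 1 < y) :
    corridorWalks d (n + 1) y = ∅ := by
  refine eq_empty_of_forall_notMem fun r hr => ?_
  rw [← Fin.snoc_init_self r, snoc_mem_corridorWalks_iff] at hr
  omega

lemma card_corridorWalks_succ {y : ℤ} (hy1 : 1 ≤ y) (hy2 : y ≤ (d : ℤ) - 1) :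
    #(corridorWalks d (n + 1) y) =
      #(corridorWalks d n (y - 1)) + #(corridorWalks d n y) + #(corridorWalks d n (y + 1)) := by
  have hfiber : ∀ s ∈ ({-1, 0, 1} : Finset ℤ),
      #{r ∈ corridorWalks d (n + 1) y | r (Fin.last n) = s} = #(corridorWalks d n (y - s)) := by
    intro s hs
    have hs' : s = -1 ∨ s = 0 ∨ s = 1 := by simpa using hs
    refine card_nbij' Fin.init (fun q => Fin.snoc q s) (fun r hr => ?_) (fun q hq => ?_)
      (fun r hr => ?_) (fun q _ => Fin.init_snoc _ _)
    · obtain ⟨hr, hlast⟩ := mem_filter.mp hr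
      rw [← Fin.snoc_init_self r, hlast, snoc_mem_corridorWalks_iff] at hr
      exact hr.2.2.2
    · rw [mem_coe, mem_filter]
      exact ⟨snoc_mem_corridorWalks_iff.mpr ⟨hs', hy1, hy2, hq⟩, Fin.snoc_last _ _⟩
    · obtain ⟨-, rfl⟩ := mem_filter.mp hr
      exact Fin.snoc_init_self r
  rw [card_eq_sum_card_fiberwise (f := fun r => r (Fin.last n)) (t := {-1, 0, 1}) fun r hr => ?_,
    sum_congr rfl hfiber]
  · rw [sum_insert (by decide), sum_insert (by decide), sum_singleton]
    simp only [sub_neg_eq_add, sub_zero]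
    ring
  · simpa using (mem_corridorWalks.mp hr).1.1 (Fin.last n)

end CorridorWalks

lemma imageSum_freeCount_zero {d : ℕ} (hd : 2 ≤ d) {y : ℤ} (hy0 : 0 ≤ y) (hyd : y ≤ d) :
    imageSum d (freeCount 0) y = if y = 1 then 1 else 0 := by
  rw [imageSum, finsum_eq_single _ 0 fun m hm => ?_]
  · simp only [mul_zero, sub_zero, freeCount_zero]
    split_ifs <;> omega
  · have hfar : 2 * d ≤ 2 * d * m ∨ 2 * d * m ≤ -(2 * d) := by
      rcases lt_or_gt_of_ne hm with h | h
      · right; nlinarith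
      · left; nlinarith
    simp only [freeCount_zero]
    split_ifs <;> omega

theorem card_corridorWalks_eq_imageSum {d : ℕ} (hd : 2 ≤ d) (n : ℕ) {y : ℤ} (hy0 : 0 ≤ y)
    (hyd : y ≤ d) : (#(corridorWalks d n y) : ℤ) = imageSum d (freeCount n) y := by
  induction n generalizing y with
  | zero => rw [card_corridorWalks_zero, imageSum_freeCount_zero hd hy0 hyd]; push_cast; rfl
  | succ n ih =>
    rcases hy0.eq_or_lt with rfl | hy1
    · rw [corridorWalks_succ_eq_empty (by omega), imageSum_zero (freeCount_one_sub _)]; rfl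
    rcases hyd.eq_or_lt with rfl | hy2
    · rw [corridorWalks_succ_eq_empty (by omega), imageSum_self (freeCount_one_sub _)]; rfl
    rw [card_corridorWalks_succ (by omega) (by omega), funext (freeCount_succ n),
      imageSum_three_step (hasFiniteSupport_freeCount n) (by omega), ← ih (by omega) (by omega),
      ← ih (by omega) (by omega), ← ih (by omega) (by omega)]
    push_cast
    rfl

lemma sum_choose_mul_finsum_binomZ {d : ℕ} (hd : d ≠ 0) (n : ℕ) :
    ∑ j ∈ range (n + 1), (n.choose j : ℤ) *
        ∑ᶠ m : ℤ, ((binomZ (j + 1) (2 * d * m - j + n) : ℤ) -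
          (binomZ (j + 1) (2 * d * m - j + n + d) : ℤ)) =
      ∑ᶠ m : ℤ, (freeCount n (2 * d * m) - freeCount n (2 * d * m + d)) := by
  simp only [mul_finsum]
  rw [← finsum_sum_comm _ _ fun j _ => ?_]
  · refine finsum_congr fun m => ?_
    simp only [freeCount, ← sum_sub_distrib, mul_sub]
    refine sum_congr rfl fun j _ => ?_
    rw [show (2 * d * m + d - j + n : ℤ) = 2 * d * m - j + n + d by ring]
  exact .fun_mul_right _ <| .fun_sub
    ((hasFiniteSupport_binomZ (j + 1)).fun_comp_of_injective
      (g := fun m : ℤ => 2 * d * m - j + n) fun a b h => by simpa [hd] using h)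
    ((hasFiniteSupport_binomZ (j + 1)).fun_comp_of_injective
      (g := fun m : ℤ => 2 * d * m - j + n + d) fun a b h => by simpa [hd] using h)

/-- Binomial-coefficient formula for the three-choice corridor numbers:
`c'_n = Σ_{j=0}^{n} C(n,j) Σ_{m∈ℤ} [C(j+1, 2dm − j + n) − C(j+1, 2dm − j + n + d)]`. -/
theorem motzkin_formula (d : ℕ) (hd : 2 ≤ d) (n : ℕ) :
    (motzkinCount d n : ℤ) =
      ∑ j ∈ Finset.range (n + 1), (n.choose j : ℤ) *
        ∑ᶠ m : ℤ, ((binomZ (j + 1) (2 * d * m - j + n) : ℤ) -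
          (binomZ (j + 1) (2 * d * m - j + n + d) : ℤ)) := by
  calc (motzkinCount d n : ℤ) = ∑ y ∈ Ico (1 : ℤ) d, imageSum d (freeCount n) y := by
        rw [motzkinCount_eq_sum_card_corridorWalks hd, Nat.cast_sum]
        exact sum_congr rfl fun y hy =>
          card_corridorWalks_eq_imageSum hd n (by grind) (by grind)
    _ = ∑ᶠ m : ℤ, (freeCount n (2 * d * m) - freeCount n (2 * d * m + d)) :=
        sum_Ico_imageSum (freeCount_one_sub n) (hasFiniteSupport_freeCount n) (by omega)
    _ = _ := (sum_choose_mul_finsum_binomZ (by omega) n).symm
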